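/- For all nonnegative integers n, sum_{k=0}^{n} (-1)^k * (k!/(k+3)) * S(n, k) = B_n + (3/2) * B_{n+1} + (1/2) * B_{n+2}. -/
import Mathlib


open Finset

/-- Stirling numbers of the second kind. -/
def stirling2 : ℕ → ℕ → ℕ
  | 0, 0 => 1
  | 0, _ + 1 => 0
  | _ + 1, 0 => 0
  | n + 1, k + 1 => stirling2 n k + (k + 1) * stirling2 n (k + 1)

/-- Signed Stirling numbers of the first kind. -/
def stirling1 : ℕ → ℕ → ℤ
  | 0, 0 => 1
  | 0, _ + 1 => 0
  | n + 1, 0 => -(n : ℤ) * stirling1 n 0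
  | n + 1, k + 1 => stirling1 n k - (n : ℤ) * stirling1 n (k + 1)

/-- Bernoulli numbers of the second kind: `∫₀¹ x(x-1)⋯(x-n+1) dx`. -/
noncomputable def bernoulliStar (n : ℕ) : ℝ :=
  ∫ x in (0:ℝ)..1, (descPochhammer ℝ n).eval x

section Aux

open Polynomial

lemma stirling2_zero_right' (n : ℕ) : stirling2 (n + 1) 0 = 0 := rfl

lemma stirling2_eq_zero_of_lt : ∀ n k, n < k → stirling2 n k = 0
  | 0, _ + 1, _ => rfl
  | n + 1, k + 1, h => by
    have h1 : n < k := Nat.lt_of_succ_lt_succ h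
    rw [stirling2, stirling2_eq_zero_of_lt n k h1,
      stirling2_eq_zero_of_lt n (k+1) (Nat.lt_succ_of_lt h1)]
    ring

/-- Worpitzky: `x^n = ∑ S(n,k) x^(falling k)`. -/
lemma worpitzky (n : ℕ) (x : ℚ) :
    x ^ n = ∑ k ∈ range (n + 1), (stirling2 n k : ℚ) * (descPochhammer ℚ k).eval x := by
  induction n with
  | zero => simp [stirling2]
  | succ n ih =>
    have key : ∀ k : ℕ, (descPochhammer ℚ k).eval x * x
        = (descPochhammer ℚ (k+1)).eval x + k * (descPochhammer ℚ k).eval x := by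
      intro k
      rw [descPochhammer_succ_eval]
      ring
    calc x ^ (n+1) = (∑ k ∈ range (n + 1), (stirling2 n k : ℚ) * (descPochhammer ℚ k).eval x) * x := by
          rw [pow_succ, ih]
      _ = ∑ k ∈ range (n + 1), (stirling2 n k : ℚ) * ((descPochhammer ℚ (k+1)).eval x
            + k * (descPochhammer ℚ k).eval x) := by
          rw [Finset.sum_mul]
          exact Finset.sum_congr rfl fun k _ => by rw [mul_assoc, key k]
      _ = ∑ k ∈ range (n + 1), (stirling2 n k : ℚ) * (descPochhammer ℚ (k+1)).eval x
            + ∑ k ∈ range (n + 1), (k : ℚ) * (stirling2 n k : ℚ) * (descPochhammer ℚ k).eval x := by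
          rw [← Finset.sum_add_distrib]
          exact Finset.sum_congr rfl fun k _ => by ring
      _ = ∑ k ∈ range (n + 2), (stirling2 (n+1) k : ℚ) * (descPochhammer ℚ k).eval x := by
          rw [Finset.sum_range_succ' (fun k => (stirling2 (n+1) k : ℚ) * (descPochhammer ℚ k).eval x)]
          simp only [stirling2, Nat.cast_add, Nat.cast_mul, Nat.cast_ofNat, stirling2_zero_right',
            Nat.cast_zero, zero_mul, add_zero]
          have h2 : ∑ k ∈ range (n + 1), (k : ℚ) * (stirling2 n k : ℚ) * (descPochhammer ℚ k).eval x
              = ∑ j ∈ range (n + 1), ((j:ℚ)+1) * (stirling2 n (j+1) : ℚ) * (descPochhammer ℚ (j+1)).eval x := by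
            rw [Finset.sum_range_succ' (fun k => (k : ℚ) * (stirling2 n k : ℚ) * (descPochhammer ℚ k).eval x)]
            rw [Finset.sum_range_succ (fun j => ((j:ℚ)+1) * (stirling2 n (j+1) : ℚ) * (descPochhammer ℚ (j+1)).eval x)]
            rw [stirling2_eq_zero_of_lt n (n+1) (Nat.lt_succ_self n)]
            push_cast
            simp
          rw [h2, ← Finset.sum_add_distrib]
          exact Finset.sum_congr rfl fun j _ => by push_cast; ring

/-- Hockey stick for falling factorials. -/
lemma hockey (k N : ℕ) :
    ∑ x ∈ range N, (descPochhammer ℚ k).eval (x : ℚ)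
      = (descPochhammer ℚ (k+1)).eval (N : ℚ) / (k + 1) := by
  induction N with
  | zero => simp [descPochhammer_ne_zero_eval_zero ℚ (Nat.succ_ne_zero k)]
  | succ N ih =>
    rw [Finset.sum_range_succ, ih]
    have h1 : (descPochhammer ℚ (k+1)).eval ((N:ℚ)+1) = ((N:ℚ)+1) * (descPochhammer ℚ k).eval (N : ℚ) := by
      rw [descPochhammer_succ_left]
      simp [eval_comp]
    have h2 : (descPochhammer ℚ (k+1)).eval (N:ℚ) = (descPochhammer ℚ k).eval (N : ℚ) * ((N:ℚ) - k) :=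
      descPochhammer_succ_eval k (N:ℚ)
    have hk : ((k:ℚ) + 1) ≠ 0 := by positivity
    push_cast
    rw [h1, h2]
    field_simp
    ring

lemma desc_deriv_zero : ∀ k : ℕ,
    (derivative (descPochhammer ℚ (k+1))).eval 0 = (-1)^k * k.factorial
  | 0 => by simp
  | k + 1 => by
    rw [descPochhammer_succ_right ℚ (k+1), derivative_mul, eval_add, eval_mul, eval_mul,
      descPochhammer_ne_zero_eval_zero ℚ (Nat.succ_ne_zero k)]
    have := desc_deriv_zero k
    simp only [derivative_sub, derivative_X, derivative_natCast] at *
    simp only [eval_sub, eval_X, eval_natCast, this]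
    push_cast [Nat.factorial_succ]
    ring

lemma a1 (n : ℕ) :
    ∑ k ∈ range (n + 1), (-1 : ℚ) ^ k * (k.factorial : ℚ) / (k + 1) * stirling2 n k
      = _root_.bernoulli n := by
  set P : ℚ[X] := ∑ k ∈ range (n + 1),
      C ((stirling2 n k : ℚ) / (k + 1)) * descPochhammer ℚ (k+1) with hP
  set Q : ℚ[X] := ∑ i ∈ range (n + 1),
      C (_root_.bernoulli i * ((n + 1).choose i) / (n + 1)) * X ^ (n + 1 - i) with hQ
  have hPQeval : ∀ N : ℕ, P.eval (N : ℚ) = Q.eval (N : ℚ) := by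
    intro N
    have lhs : P.eval (N : ℚ) = ∑ x ∈ range N, (x : ℚ) ^ n := by
      simp only [hP, eval_finset_sum, eval_mul, eval_C]
      calc ∑ k ∈ range (n+1), (stirling2 n k : ℚ)/((k:ℚ)+1) * (descPochhammer ℚ (k+1)).eval (N:ℚ)
          = ∑ k ∈ range (n+1), ∑ x ∈ range N, (stirling2 n k : ℚ) * (descPochhammer ℚ k).eval (x:ℚ) := by
            refine Finset.sum_congr rfl fun k _ => ?_
            rw [← Finset.mul_sum, hockey]; ring
        _ = ∑ x ∈ range N, ∑ k ∈ range (n+1), (stirling2 n k:ℚ) * (descPochhammer ℚ k).eval (x:ℚ) :=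
            Finset.sum_comm
        _ = ∑ x ∈ range N, (x:ℚ)^n := by
            exact Finset.sum_congr rfl fun x _ => (worpitzky n x).symm
    have rhs : Q.eval (N : ℚ) = ∑ x ∈ range N, (x : ℚ) ^ n := by
      simp only [hQ, eval_finset_sum, eval_mul, eval_C, eval_pow, eval_X]
      rw [sum_range_pow N n]
      exact Finset.sum_congr rfl fun i _ => by ring
    rw [lhs, rhs]
  have hPQ : P = Q := by
    have h0 : P - Q = 0 := by
      apply Polynomial.eq_zero_of_infinite_isRoot
      refine (Set.infinite_range_of_injective (Nat.cast_injective (R := ℚ))).mono ?_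
      rintro _ ⟨N, rfl⟩
      simp [IsRoot, hPQeval N]
    exact sub_eq_zero.mp h0
  have hd : (derivative P).eval 0 = (derivative Q).eval 0 := by rw [hPQ]
  have hdP : (derivative P).eval 0
      = ∑ k ∈ range (n + 1), (-1 : ℚ) ^ k * (k.factorial : ℚ) / (k + 1) * stirling2 n k := by
    simp only [hP, derivative_sum, derivative_C_mul, eval_finset_sum, eval_mul, eval_C]
    refine Finset.sum_congr rfl fun k _ => ?_
    rw [desc_deriv_zero k]; ring
  have hdQ : (derivative Q).eval 0 = _root_.bernoulli n := by
    simp only [hQ, derivative_sum, derivative_C_mul, derivative_X_pow, eval_finset_sum,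
      eval_mul, eval_C, eval_natCast, eval_pow, eval_X]
    rw [Finset.sum_eq_single n]
    · rw [Nat.choose_succ_self_right]
      have h1 : n + 1 - n = 1 := by omega
      rw [h1]
      have : ((n:ℚ)+1) ≠ 0 := by positivity
      push_cast
      field_simp
    · intro i hi hne
      have h2 : n + 1 - i - 1 = n - i := by omega
      have h3 : n - i ≠ 0 := by
        have := Finset.mem_range.mp hi; omega
      rw [h2, zero_pow h3]
      ring
    · intro h; exact absurd (Finset.self_mem_range_succ n) h
  rw [← hdP, hd, hdQ]

def myA (m n : ℕ) : ℚ :=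
  ∑ k ∈ range (n + 1), (-1 : ℚ) ^ k * (k.factorial : ℚ) / (k + m) * stirling2 n k

lemma myA_succ (m n : ℕ) (hm : m ≠ 0) :
    myA m (n + 1) = m * (myA (m + 1) n - myA m n) := by
  have hm' : (1:ℚ) ≤ (m:ℚ) := by exact_mod_cast Nat.one_le_iff_ne_zero.mpr hm
  unfold myA
  rw [Finset.sum_range_succ' (fun k => (-1 : ℚ) ^ k * (k.factorial : ℚ) / (k + m) * stirling2 (n+1) k)]
  have h0 : stirling2 (n+1) 0 = 0 := rfl
  rw [h0]
  simp only [Nat.cast_zero, mul_zero, add_zero]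
  push_cast
  have hsplit : ∀ j ∈ range (n+1),
      (-1 : ℚ) ^ (j+1) * ((j+1).factorial : ℚ) / ((j:ℚ)+1 + m) * stirling2 (n+1) (j+1)
      = (-1 : ℚ) ^ (j+1) * ((j+1).factorial : ℚ) / ((j:ℚ)+1 + m) * stirling2 n j
        + (-1 : ℚ) ^ (j+1) * ((j+1).factorial : ℚ) / ((j:ℚ)+1 + m) * ((j:ℚ)+1) * stirling2 n (j+1) := by
    intro j _
    rw [show stirling2 (n+1) (j+1) = stirling2 n j + (j + 1) * stirling2 n (j+1) from rfl]
    push_cast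
    ring
  rw [Finset.sum_congr rfl hsplit, Finset.sum_add_distrib]
  have hsecond : ∑ j ∈ range (n+1),
      (-1 : ℚ) ^ (j+1) * ((j+1).factorial : ℚ) / ((j:ℚ)+1 + m) * ((j:ℚ)+1) * stirling2 n (j+1)
      = ∑ k ∈ range (n+1), (-1 : ℚ) ^ k * (k.factorial : ℚ) / ((k:ℚ) + m) * (k:ℚ) * stirling2 n k := by
    rw [Finset.sum_range_succ' (fun k => (-1 : ℚ) ^ k * (k.factorial : ℚ) / ((k:ℚ) + m) * (k:ℚ) * stirling2 n k)]
    rw [Finset.sum_range_succ (fun j => (-1 : ℚ) ^ (j+1) * ((j+1).factorial : ℚ) / ((j:ℚ)+1 + m) * ((j:ℚ)+1) * stirling2 n (j+1))]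
    rw [stirling2_eq_zero_of_lt n (n+1) (Nat.lt_succ_self n)]
    push_cast
    simp
  rw [hsecond]
  rw [← Finset.sum_add_distrib, ← Finset.sum_sub_distrib, Finset.mul_sum]
  refine Finset.sum_congr rfl fun k _ => ?_
  have hk1 : ((k:ℚ) + m) ≠ 0 := by positivity
  have hk2 : ((k:ℚ) + 1 + m) ≠ 0 := by positivity
  push_cast [Nat.factorial_succ]
  field_simp
  ring

lemma myA_one (n : ℕ) : myA 1 n = _root_.bernoulli n := by
  rw [← a1 n]
  unfold myA
  exact Finset.sum_congr rfl fun k _ => by norm_num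

end Aux

theorem stmt13 (n : ℕ) :
    ∑ k ∈ Finset.range (n + 1), (-1 : ℚ) ^ k * (k.factorial : ℚ) / (k + 3) * stirling2 n k =
      bernoulli n + 3 / 2 * bernoulli (n + 1) + 1 / 2 * bernoulli (n + 2) := by
  have hL : ∑ k ∈ Finset.range (n + 1), (-1 : ℚ) ^ k * (k.factorial : ℚ) / (k + 3) * stirling2 n k
      = myA 3 n := by
    unfold myA
    exact Finset.sum_congr rfl fun k _ => by norm_num
  have e2 := myA_succ 2 n (by norm_num)
  have e1 := myA_succ 1 n (by norm_num)
  have e1' := myA_succ 1 (n+1) (by norm_num)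
  norm_num at e2 e1 e1'
  rw [hL]
  linarith [myA_one n, myA_one (n+1), myA_one (n+2), e2, e1, e1']
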